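/- arXiv:1110.2300 — 6 statements merged into one kernel-verified Lean document; each statement's English description precedes it below -/
import Mathlib

section
/- Let R be a commutative Noetherian ring, I ⊆ R an ideal, and P ⊂ R a prime ideal such that P is not contained in P' for every associated prime P' of R/I. Let k be a positive integer such that I is not contained in the k-th symbolic power P^(k) of P. Then the set of associated primes of R/(I ∩ P^(k)) equals Ass(R/I) ∪ {P}. -/
/-- The `k`-th symbolic power of a prime ideal `P`: the preimage in `R` of
`P^k R_P` under the localization map `R → R_P`. -/
noncomputable def Ideal.symbolicPower {R : Type*} [CommRing R] (P : Ideal R)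
    (hP : P.IsPrime) (k : ℕ) : Ideal R :=
  letI := hP
  (Ideal.map (algebraMap R (Localization.AtPrime P)) (P ^ k)).comap
    (algebraMap R (Localization.AtPrime P))

/-!
The symbolic power `Q = P^(k)` is `P`-primary, so `Ass(R/Q) = {P}`. Since `R/(I ∩ Q)` embeds
into `R/I × R/Q`, this gives `Ass(R/(I ∩ Q)) ⊆ Ass(R/I) ∪ {P}`. Conversely, if `x` has annihilator
`P'` in `R/I` and `s ∈ Q \ P'`, then `s x` has annihilator `P'` in `R/(I ∩ Q)`; and `I/(I ∩ Q)` is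
a nonzero submodule of `R/(I ∩ Q)` that also embeds into `R/Q`, so its associated primes, which
are all equal to `P`, make `P` an associated prime of `R/(I ∩ Q)`.
-/

namespace Ideal

variable {R : Type*} [CommRing R]

theorem radical_map_pow_atPrime (P : Ideal R) [P.IsPrime] {k : ℕ} (hk : k ≠ 0) :
    (map (algebraMap R (Localization.AtPrime P)) (P ^ k)).radical =
      IsLocalRing.maximalIdeal (Localization.AtPrime P) := by
  rw [Ideal.map_pow, radical_pow _ hk, Localization.AtPrime.map_eq_maximalIdeal,
    (IsLocalRing.maximalIdeal.isMaximal _).isPrime.radical]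

section SymbolicPower

variable (P : Ideal R) (hP : P.IsPrime) {k : ℕ}

theorem radical_symbolicPower (hk : k ≠ 0) : (P.symbolicPower hP k).radical = P := by
  have := hP
  rw [symbolicPower, ← comap_radical, radical_map_pow_atPrime P hk, ← under_def,
    Localization.AtPrime.under_maximalIdeal]

theorem isPrimary_symbolicPower (hk : k ≠ 0) : (P.symbolicPower hP k).IsPrimary := by
  have := hP
  refine IsPrimary.comap (isPrimary_of_isMaximal_radical ?_) _
  rw [radical_map_pow_atPrime P hk]
  exact IsLocalRing.maximalIdeal.isMaximal _

theorem associatedPrimes_quotient_symbolicPower [IsNoetherianRing R] (hk : k ≠ 0) :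
    associatedPrimes R (R ⧸ P.symbolicPower hP k) = {P} := by
  rw [associatedPrimes.eq_singleton_of_isPrimary (isPrimary_symbolicPower P hP hk),
    radical_symbolicPower P hP hk]

end SymbolicPower

theorem mem_colon_bot_singleton_mk_iff (K : Ideal R) (x a : R) :
    a ∈ (⊥ : Submodule R (R ⧸ K)).colon {Quotient.mk K x} ↔ a * x ∈ K := by
  rw [Submodule.mem_colon_singleton, Submodule.mem_bot, ← Quotient.mk_eq_mk,
    ← Submodule.Quotient.mk_smul, smul_eq_mul, Submodule.Quotient.mk_eq_zero]

theorem associatedPrimes_quotient_inf_subset (I J : Ideal R) :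
    associatedPrimes R (R ⧸ (I ⊓ J)) ⊆
      associatedPrimes R (R ⧸ I) ∪ associatedPrimes R (R ⧸ J) := by
  rw [← associatedPrimes.prod]
  refine associatedPrimes.subset_of_injective
    (f := (Submodule.factor inf_le_left).prod (Submodule.factor inf_le_right)) ?_
  rw [← LinearMap.ker_eq_bot, LinearMap.ker_eq_bot']
  intro m hm
  obtain ⟨x, rfl⟩ := Submodule.mkQ_surjective _ m
  simpa [Quotient.eq_zero_iff_mem] using hm

theorem mem_associatedPrimes_quotient_inf [IsNoetherianRing R] {I J p : Ideal R}
    (hp : p ∈ associatedPrimes R (R ⧸ I)) (hJ : ¬ J ≤ p) :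
    p ∈ associatedPrimes R (R ⧸ (I ⊓ J)) := by
  obtain ⟨hp, xb, hx⟩ := isAssociatedPrime_iff.mp hp
  obtain ⟨x, rfl⟩ := Quotient.mk_surjective xb
  replace hx (a : R) : a ∈ p ↔ a * x ∈ I := by rw [hx, mem_colon_bot_singleton_mk_iff]
  obtain ⟨s, hsJ, hsp⟩ := SetLike.not_le_iff_exists.mp hJ
  refine isAssociatedPrime_iff.mpr ⟨hp, Quotient.mk _ (s * x), ?_⟩
  ext a
  rw [mem_colon_bot_singleton_mk_iff, mem_inf, ← mul_assoc, ← hx,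
    and_iff_left (J.mul_mem_right x (J.mul_mem_left a hsJ))]
  exact ⟨fun ha ↦ p.mul_mem_right s ha, fun has ↦ (hp.mem_or_mem has).resolve_right hsp⟩

theorem exists_mem_associatedPrimes_quotient_inf [IsNoetherianRing R] {I J : Ideal R}
    (h : ¬ I ≤ J) :
    ∃ p ∈ associatedPrimes R (R ⧸ J), p ∈ associatedPrimes R (R ⧸ (I ⊓ J)) := by
  let N : Submodule R (R ⧸ (I ⊓ J)) := Submodule.map (I ⊓ J).mkQ I
  have : Nontrivial N := by
    rw [Submodule.nontrivial_iff_ne_bot, Ne, ← LinearMap.le_ker_iff_map, Submodule.ker_mkQ]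
    simpa using h
  obtain ⟨p, hp⟩ := associatedPrimes.nonempty R N
  refine ⟨p, associatedPrimes.subset_of_injective
    (f := (Submodule.factor inf_le_right).comp N.subtype) ?_ hp,
    associatedPrimes.subset_of_injective N.injective_subtype hp⟩
  rw [← LinearMap.ker_eq_bot, LinearMap.ker_eq_bot']
  rintro ⟨_, hm⟩ hmJ
  obtain ⟨y, hy, rfl⟩ := Submodule.mem_map.mp hm
  simpa [Quotient.eq_zero_iff_mem, hy] using hmJ

end Ideal

theorem stmt0 {R : Type*} [CommRing R] [IsNoetherianRing R]
    (I P : Ideal R) (hP : P.IsPrime)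
    (hnc : ∀ P' ∈ associatedPrimes R (R ⧸ I), ¬ P ≤ P')
    (k : ℕ) (hk : 0 < k) (hIs : ¬ I ≤ P.symbolicPower hP k) :
    associatedPrimes R (R ⧸ (I ⊓ P.symbolicPower hP k)) =
      associatedPrimes R (R ⧸ I) ∪ {P} := by
  have hQ := Ideal.associatedPrimes_quotient_symbolicPower P hP hk.ne'
  refine ((Ideal.associatedPrimes_quotient_inf_subset I _).trans_eq (by rw [hQ])).antisymm ?_
  rintro p (hp | hpP)
  · refine Ideal.mem_associatedPrimes_quotient_inf hp fun hle ↦ hnc p hp ?_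
    rwa [← hp.isPrime.radical_le_iff, Ideal.radical_symbolicPower P hP hk.ne'] at hle
  · obtain ⟨q, hqQ, hq⟩ := Ideal.exists_mem_associatedPrimes_quotient_inf hIs
    rw [hQ, Set.mem_singleton_iff] at hqQ
    rw [Set.mem_singleton_iff.mp hpP]
    exact hqQ ▸ hq
end

section
/- Let K be a field, S = K[x_1, ..., x_n] the polynomial ring, and let P_1, ..., P_m ⊂ S be an arbitrary finite collection of nonzero monomial prime ideals. Then there exists a monomial ideal I ⊆ S and an integer s_0 such that for every s ≥ s_0, the set of associated primes of S/I^s equals {P_1, ..., P_m}; that is, Ass^∞(I) = {P_1, ..., P_m}. -/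
/-!
For `F ⊆ {1, …, n}` and `t ≥ 1`, the monomials of `F`-weight `∑_{j ∈ F} a_j ≥ t` span a
`P_F`-primary ideal `Q_F(t)`: `F`-weighted orders add under multiplication, so the ideal of
elements of positive order is prime. Put `c_i = (|F_i| + 1)!` and `J_d = ⋂ᵢ Q_{F_i}(c_i d)`.
The pairs `(a, d)` with `x^a ∈ J_d` form a monoid cut out by linear inequalities; by Dickson's
lemma it is generated, up to domination, by finitely many elements of positive degree, and an
lcm argument on their degrees gives `k > 0` with `J_k ^ s = J_{ks}` for every `s`. Hence for
`I = J_k` every associated prime of `I ^ s` is the radical `P_{F_i}` of some component.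
Conversely, the factorials leave room for a monomial of `F_i`-weight `c_i k s - 1` lying in all
components with a different support; its annihilator modulo `I ^ s` is `P_{F_i}`.
-/

open MvPolynomial

/-- A monomial ideal: an ideal generated by monomials. -/
def IsMonomialIdeal {K : Type*} [Field K] {n : ℕ}
    (I : Ideal (MvPolynomial (Fin n) K)) : Prop :=
  ∃ A : Set (Fin n →₀ ℕ),
    I = Ideal.span ((fun a => (monomial a (1 : K) : MvPolynomial (Fin n) K)) '' A)

/-- A nonzero monomial prime ideal: an ideal of the form `P_F = ({x_i : i ∈ F})`
for a nonempty subset `F ⊆ {1, ..., n}`. -/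
def IsNonzeroMonomialPrime {K : Type*} [Field K] {n : ℕ}
    (P : Ideal (MvPolynomial (Fin n) K)) : Prop :=
  ∃ F : Set (Fin n), F.Nonempty ∧
    P = Ideal.span ((X : Fin n → MvPolynomial (Fin n) K) '' F)

open Finset
open Finsupp (weight)

section AssociatedPrimes

variable {R : Type*} [CommRing R]

lemma colon_bot_quotient_mk (J : Ideal R) (u : R) :
    (⊥ : Submodule R (R ⧸ J)).colon {Ideal.Quotient.mk J u} = J.colon {u} := by
  ext r
  rw [Submodule.mem_colon_singleton, Submodule.mem_colon_singleton, Submodule.mem_bot,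
    Algebra.smul_def, Ideal.Quotient.algebraMap_eq, ← map_mul, Ideal.Quotient.eq_zero_iff_mem,
    smul_eq_mul]

lemma associatedPrimes_quotient_iInf_subset {ι : Type*} [Finite ι] {Q : ι → Ideal R}
    (hQ : ∀ i, (Q i).IsPrimary) :
    associatedPrimes R (R ⧸ ⨅ i, Q i) ⊆ Set.range fun i ↦ (Q i).radical := by
  classical
  have := Fintype.ofFinite ι
  rintro p ⟨hp, x, hx⟩
  obtain ⟨u, rfl⟩ := Ideal.Quotient.mk_surjective x
  have hp_inf : p = univ.inf fun i ↦ if u ∈ Q i then ⊤ else (Q i).radical := by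
    rw [hx, colon_bot_quotient_mk, ← inf_univ_eq_iInf, Submodule.colon_finsetInf,
      ← Ideal.radicalInfTopHom_apply, map_finset_inf]
    refine inf_congr rfl fun i _ ↦ ?_
    simpa [Submodule.colon_univ] using (hQ i).radical_colon_singleton_eq_ite u
  obtain ⟨i, -, hi⟩ := Ideal.eq_inf_of_isPrime_inf (hp_inf ▸ hp)
  rw [← hp_inf] at hi
  split_ifs at hi
  · exact absurd hi.symm hp.ne_top
  · exact ⟨i, hi⟩

end AssociatedPrimes

lemma Finsupp.weight_mono {σ : Type*} (w : σ → ℕ) : Monotone (weight w : (σ →₀ ℕ) →+ ℕ) := by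
  intro a b hab
  obtain ⟨c, rfl⟩ := exists_add_of_le hab
  simp

lemma Finsupp.weight_indicator_one {σ : Type*} [Fintype σ] (F : Finset σ) (a : σ →₀ ℕ) :
    weight ((F : Set σ).indicator 1) a = ∑ q ∈ F, a q := by
  classical
  simp [Finsupp.weight_eq_sum, Set.indicator_apply, sum_ite_mem]

lemma MvPowerSeries.weightedOrder_pow {σ R : Type*} [Semiring R] [NoZeroDivisors R]
    [Nontrivial R] (w : σ → ℕ) (f : MvPowerSeries σ R) (k : ℕ) :
    (f ^ k).weightedOrder w = k • f.weightedOrder w := by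
  induction k with
  | zero => simp
  | succ k ih => rw [pow_succ, weightedOrder_mul, ih, succ_nsmul]

lemma mem_span_monomial_image_iff_of_isUpperSet {σ R : Type*} [CommSemiring R]
    {A : Set (σ →₀ ℕ)} (hA : IsUpperSet A) {f : MvPolynomial σ R} :
    f ∈ Ideal.span ((fun a ↦ monomial a (1 : R)) '' A) ↔ ∀ a ∈ f.support, a ∈ A := by
  rw [mem_ideal_span_monomial_image]
  exact forall₂_congr fun a _ ↦ ⟨fun ⟨b, hb, hba⟩ ↦ hA hba hb, fun ha ↦ ⟨a, ha, le_rfl⟩⟩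

section WeightIdeal

variable {σ R : Type*}

noncomputable def weightIdeal [CommSemiring R] (w : σ → ℕ) (t : ℕ) : Ideal (MvPolynomial σ R) :=
  Ideal.span ((fun a ↦ monomial a 1) '' {a | t ≤ weight w a})

variable {w : σ → ℕ} {t : ℕ}

section CommSemiring

variable [CommSemiring R] {f : MvPolynomial σ R}

lemma mem_weightIdeal : f ∈ weightIdeal w t ↔ ∀ a ∈ f.support, t ≤ weight w a :=
  mem_span_monomial_image_iff_of_isUpperSet fun _ _ hab ha ↦ ha.trans (Finsupp.weight_mono w hab)

lemma mem_weightIdeal_iff_le_weightedOrder :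
    f ∈ weightIdeal w t ↔ t ≤ (f : MvPowerSeries σ R).weightedOrder w := by
  rw [mem_weightIdeal]
  constructor
  · refine fun h ↦ MvPowerSeries.nat_le_weightedOrder w fun a ha ↦ ?_
    rw [coeff_coe, ← MvPolynomial.notMem_support_iff]
    exact fun hmem ↦ (h a hmem).not_gt ha
  · intro h a ha
    rw [MvPolynomial.mem_support_iff, ← coeff_coe] at ha
    exact_mod_cast h.trans (MvPowerSeries.weightedOrder_le w ha)

lemma weightIdeal_zero : (weightIdeal w 0 : Ideal (MvPolynomial σ R)) = ⊤ :=
  eq_top_iff.mpr fun _ _ ↦ mem_weightIdeal.mpr fun _ _ ↦ Nat.zero_le _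

lemma weightIdeal_mul_le (t t' : ℕ) :
    (weightIdeal w t * weightIdeal w t' : Ideal (MvPolynomial σ R)) ≤ weightIdeal w (t + t') := by
  refine Ideal.mul_le.mpr fun f hf g hg ↦ ?_
  rw [mem_weightIdeal_iff_le_weightedOrder] at hf hg ⊢
  rw [MvPolynomial.coe_mul, Nat.cast_add]
  exact (add_le_add hf hg).trans (MvPowerSeries.le_weightedOrder_mul w)

lemma span_X_image_eq_weightIdeal [Fintype σ] (F : Finset σ) :
    Ideal.span (X '' (F : Set σ)) =
      (weightIdeal ((F : Set σ).indicator 1) 1 : Ideal (MvPolynomial σ R)) := by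
  ext f
  rw [mem_ideal_span_X_image, mem_weightIdeal]
  refine forall₂_congr fun a _ ↦ ?_
  simp [Finsupp.weight_indicator_one, Nat.one_le_iff_ne_zero, sum_eq_zero_iff]

end CommSemiring

section NoZeroDivisors

variable [CommSemiring R] [NoZeroDivisors R] [Nontrivial R]

lemma colon_monomial_weightIdeal (b : σ →₀ ℕ) :
    (weightIdeal w t : Ideal (MvPolynomial σ R)).colon {monomial b 1} =
      weightIdeal w (t - weight w b) := by
  ext f
  rw [Submodule.mem_colon_singleton, smul_eq_mul, mem_weightIdeal_iff_le_weightedOrder,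
    mem_weightIdeal_iff_le_weightedOrder, MvPolynomial.coe_mul, MvPowerSeries.weightedOrder_mul,
    coe_monomial, MvPowerSeries.weightedOrder_monomial_of_ne_zero w one_ne_zero,
    ENat.natCast_sub, tsub_le_iff_right]

lemma radical_weightIdeal (ht : t ≠ 0) :
    (weightIdeal w t : Ideal (MvPolynomial σ R)).radical = weightIdeal w 1 := by
  ext f
  simp only [Ideal.mem_radical_iff, mem_weightIdeal_iff_le_weightedOrder, MvPolynomial.coe_pow]
  constructor
  · rintro ⟨k, hk⟩
    by_contra! h
    rw [Nat.cast_one, Order.lt_one_iff] at h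
    rw [MvPowerSeries.weightedOrder_pow, h, smul_zero, nonpos_iff_eq_zero, Nat.cast_eq_zero] at hk
    exact ht hk
  · intro hf
    refine ⟨t, le_trans ?_ (MvPowerSeries.le_weightedOrder_pow w t)⟩
    simpa using nsmul_le_nsmul_right hf t

lemma isPrimary_weightIdeal (ht : t ≠ 0) :
    (weightIdeal w t : Ideal (MvPolynomial σ R)).IsPrimary := by
  refine Ideal.isPrimary_iff.mpr ⟨fun htop ↦ ?_, fun {f g} hfg ↦ ?_⟩
  · have h1 := mem_weightIdeal_iff_le_weightedOrder.mp (htop ▸ Submodule.mem_top (x := 1))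
    rw [MvPolynomial.coe_one, MvPowerSeries.weightedOrder_one, nonpos_iff_eq_zero,
      Nat.cast_eq_zero] at h1
    exact ht h1
  · rw [radical_weightIdeal ht]
    simp only [mem_weightIdeal_iff_le_weightedOrder, MvPolynomial.coe_mul,
      MvPowerSeries.weightedOrder_mul] at hfg ⊢
    refine or_iff_not_imp_right.mpr fun hg ↦ ?_
    rw [not_le, Nat.cast_one, Order.lt_one_iff] at hg
    rwa [hg, add_zero] at hfg

lemma isPrime_weightIdeal_one : (weightIdeal w 1 : Ideal (MvPolynomial σ R)).IsPrime :=
  radical_weightIdeal (w := w) (R := R) one_ne_zero ▸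
    Ideal.isPrime_radical (isPrimary_weightIdeal one_ne_zero)

end NoZeroDivisors

lemma weightIdeal_one_mem_associatedPrimes {ι : Type*} [CommRing R] [IsDomain R]
    {W : ι → σ → ℕ} {t : ι → ℕ} {i : ι} {a : σ →₀ ℕ} (hi : weight (W i) a + 1 = t i)
    (hj : ∀ j, t j ≤ weight (W j) a ∨ W j = W i ∧ t j = t i) :
    weightIdeal (W i) 1 ∈ associatedPrimes (MvPolynomial σ R)
      (MvPolynomial σ R ⧸ ⨅ j, (weightIdeal (W j) (t j) : Ideal (MvPolynomial σ R))) := by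
  refine ⟨isPrime_weightIdeal_one, Ideal.Quotient.mk _ (monomial a 1), ?_⟩
  have hti : t i - weight (W i) a = 1 := by omega
  rw [colon_bot_quotient_mk, Submodule.iInf_colon]
  simp_rw [colon_monomial_weightIdeal]
  rw [le_antisymm (iInf_le_of_le i (by rw [hti])) (le_iInf fun j ↦ ?_),
    radical_weightIdeal one_ne_zero]
  rcases hj j with h | ⟨hW, ht⟩
  · rw [Nat.sub_eq_zero_of_le h, weightIdeal_zero]
    exact le_top
  · rw [hW, ht, hti]

end WeightIdeal

section Veronese

variable {V : Type*} [DecidableEq V] (deg : V → ℕ) {G : Finset V}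

lemma exists_le_sum_map_eq_of_dvd {ℓ : ℕ} (hG : ∀ g ∈ G, 0 < deg g ∧ deg g ∣ ℓ)
    {S : Multiset V} (hS : ∀ g ∈ S, g ∈ G) (h : ℓ * #G < (S.map deg).sum) :
    ∃ B ≤ S, (B.map deg).sum = ℓ := by
  have hsum : (S.map deg).sum = ∑ g ∈ G, S.count g * deg g := by
    rw [sum_multiset_map_count]
    refine sum_subset (fun g hg ↦ hS g (Multiset.mem_toFinset.mp hg)) fun g _ hg ↦ ?_
    rw [Multiset.count_eq_zero.mpr (mt Multiset.mem_toFinset.mpr hg), zero_smul]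
  obtain ⟨g, hg, hℓg⟩ : ∃ g ∈ G, ℓ ≤ S.count g * deg g := by
    by_contra! H
    have := sum_le_sum fun g hg ↦ (H g hg).le
    rw [← hsum, sum_const, smul_eq_mul, mul_comm] at this
    omega
  obtain ⟨hdeg, q, rfl⟩ := hG g hg
  refine ⟨Multiset.replicate q g, Multiset.le_count_iff_replicate_le.mp ?_, by simp [mul_comm]⟩
  exact le_of_mul_le_mul_right (by linarith) hdeg

lemma exists_le_sum_map_eq_mul {ℓ : ℕ} (hℓ : 0 < ℓ) (hG : ∀ g ∈ G, 0 < deg g ∧ deg g ∣ ℓ)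
    (j : ℕ) {S : Multiset V} (hS : ∀ g ∈ S, g ∈ G) (h : ℓ * (#G + j) ≤ (S.map deg).sum) :
    ∃ B ≤ S, (B.map deg).sum = ℓ * j := by
  induction j generalizing S with
  | zero => exact ⟨0, Multiset.zero_le S, by simp⟩
  | succ j ih =>
    obtain ⟨B, hBS, hB⟩ := exists_le_sum_map_eq_of_dvd deg hG hS (by nlinarith)
    have hsplit : (S.map deg).sum = ((S - B).map deg).sum + ℓ := by
      rw [← hB, ← Multiset.sum_add, ← Multiset.map_add, tsub_add_cancel_of_le hBS]
    obtain ⟨B', hB'S, hB'⟩ :=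
      ih (fun g hg ↦ hS g (Multiset.mem_of_le tsub_le_self hg)) (by nlinarith)
    refine ⟨B + B', ?_, by rw [Multiset.map_add, Multiset.sum_add, hB, hB', mul_add_one, add_comm]⟩
    calc B + B' ≤ B + (S - B) := add_le_add le_rfl hB'S
      _ = S := add_tsub_cancel_of_le hBS

theorem exists_partition_sum_map_eq (hG : ∀ g ∈ G, 0 < deg g) :
    ∃ k > 0, ∀ (s : ℕ) (S : Multiset V), (∀ g ∈ S, g ∈ G) → (S.map deg).sum = k * s →
      ∃ P : Multiset (Multiset V), Multiset.card P = s ∧ (∀ B ∈ P, (B.map deg).sum = k) ∧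
        P.sum = S := by
  set ℓ := G.lcm deg
  have hℓ : 0 < ℓ := Nat.pos_of_ne_zero fun h0 ↦ by
    obtain ⟨g, hg, hg0⟩ := lcm_eq_zero_iff.mp h0
    exact (hG g hg).ne' hg0
  have hGℓ : ∀ g ∈ G, 0 < deg g ∧ deg g ∣ ℓ := fun g hg ↦ ⟨hG g hg, dvd_lcm hg⟩
  -- A multiset of degree `k * (s + 1) ≥ 2 * k` has a sub-multiset of degree exactly `k`.
  refine ⟨ℓ * (#G + 1), by positivity, fun s ↦ ?_⟩
  induction s with
  | zero =>
    intro S hS hsum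
    refine ⟨0, rfl, by simp, (Multiset.eq_zero_of_forall_notMem fun g hg ↦ ?_).symm⟩
    have := Multiset.le_sum_of_mem (Multiset.mem_map_of_mem deg hg)
    linarith [hG g (hS g hg)]
  | succ s ih =>
    intro S hS hsum
    rcases Nat.eq_zero_or_pos s with rfl | hs
    · exact ⟨{S}, rfl, by simpa using hsum, by simp⟩
    obtain ⟨B, hBS, hB⟩ := exists_le_sum_map_eq_mul deg hℓ hGℓ (#G + 1) hS
      (by rw [hsum, mul_assoc]; exact Nat.mul_le_mul_left ℓ (by nlinarith))
    have hsplit : (S.map deg).sum = ((S - B).map deg).sum + ℓ * (#G + 1) := by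
      rw [← hB, ← Multiset.sum_add, ← Multiset.map_add, tsub_add_cancel_of_le hBS]
    obtain ⟨P, hPcard, hPdeg, hPsum⟩ :=
      ih (S - B) (fun g hg ↦ hS g (Multiset.mem_of_le tsub_le_self hg)) (by linarith)
    refine ⟨B ::ₘ P, by simp [hPcard], fun B' hB' ↦ ?_,
      by rw [Multiset.sum_cons, hPsum, add_tsub_cancel_of_le hBS]⟩
    rcases Multiset.mem_cons.mp hB' with rfl | hB'
    exacts [hB, hPdeg B' hB']

end Veronese

theorem AddSubmonoid.exists_finset_sum_le_of_sub_mem {V : Type*} [AddCommMonoid V]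
    [PartialOrder V] [CanonicallyOrderedAdd V] [Sub V] [OrderedSub V] [WellQuasiOrderedLE V]
    (T : AddSubmonoid V) (hT : ∀ x ∈ T, ∀ y ∈ T, x ≤ y → y - x ∈ T) (deg : V →+ ℕ) :
    ∃ G : Finset V, (∀ g ∈ G, g ∈ T ∧ 0 < deg g) ∧
      ∀ x ∈ T, ∃ S : Multiset V, (∀ g ∈ S, g ∈ G) ∧ S.sum ≤ x ∧ deg S.sum = deg x := by
  set P : V → Prop := fun y ↦ y ∈ T ∧ 0 < deg y
  have hfin : {g | Minimal P g}.Finite :=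
    WellQuasiOrderedLE.finite_of_isAntichain (setOfPred_minimal_antichain P)
  refine ⟨hfin.toFinset, fun g hg ↦ (hfin.mem_toFinset.mp hg).prop, fun x hx ↦ ?_⟩
  induction hd : deg x using Nat.strong_induction_on generalizing x with
  | _ d ih =>
  rcases Nat.eq_zero_or_pos d with rfl | hpos
  · exact ⟨0, by simp, by simp, by simp⟩
  obtain ⟨g, hgx, hg⟩ := exists_minimal_le_of_wellFoundedLT P x ⟨hx, hd ▸ hpos⟩
  have hxg : deg g + deg (x - g) = deg x := by rw [← map_add, add_tsub_cancel_of_le hgx]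
  obtain ⟨S, hSG, hSle, hSdeg⟩ :=
    ih _ (by have := hg.prop.2; omega) (x - g) (hT g hg.prop.1 x hx hgx) rfl
  refine ⟨g ::ₘ S, fun y hy ↦ ?_, ?_, by rw [Multiset.sum_cons, map_add, hSdeg, hxg, hd]⟩
  · rcases Multiset.mem_cons.mp hy with rfl | hy
    exacts [hfin.mem_toFinset.mpr hg, hSG y hy]
  · calc (g ::ₘ S).sum = g + S.sum := Multiset.sum_cons g S
      _ ≤ g + (x - g) := add_le_add le_rfl hSle
      _ = x := add_tsub_cancel_of_le hgx

section Cone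

variable {σ ι : Type*} (w : ι → σ → ℕ) (c : ι → ℕ)

def cone (d : ℕ) : Set (σ →₀ ℕ) := {a | ∀ i, c i * d ≤ weight (w i) a}

lemma isUpperSet_cone (d : ℕ) : IsUpperSet (cone w c d) :=
  fun _ _ hab ha i ↦ (ha i).trans (Finsupp.weight_mono _ hab)

/-- The graded monoid of the cones `cone w c d`, with the slack of each defining inequality
recorded in a third coordinate: unlike the cone itself, it is closed under subtraction. -/
def slackMonoid : AddSubmonoid ((σ →₀ ℕ) × ℕ × (ι → ℕ)) where
  carrier := {v | ∀ i, weight (w i) v.1 = c i * v.2.1 + v.2.2 i}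
  zero_mem' := by simp
  add_mem' := by
    intro x y hx hy i
    simp only [Prod.fst_add, Prod.snd_add, map_add, Pi.add_apply, hx i, hy i]
    ring

lemma sub_mem_slackMonoid {x y : (σ →₀ ℕ) × ℕ × (ι → ℕ)} (hx : x ∈ slackMonoid w c)
    (hy : y ∈ slackMonoid w c) (hxy : x ≤ y) : y - x ∈ slackMonoid w c := by
  intro i
  obtain ⟨h1, h2, h3⟩ : x.1 ≤ y.1 ∧ x.2.1 ≤ y.2.1 ∧ x.2.2 i ≤ y.2.2 i :=
    ⟨hxy.1, hxy.2.1, hxy.2.2 i⟩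
  have hw : weight (w i) (y.1 - x.1) + weight (w i) x.1 = weight (w i) y.1 := by
    rw [← map_add, tsub_add_cancel_of_le h1]
  have hc : c i * (y.2.1 - x.2.1) + c i * x.2.1 = c i * y.2.1 := by
    rw [← mul_add, tsub_add_cancel_of_le h2]
  have := hx i
  have := hy i
  simp only [Prod.fst_sub, Prod.snd_sub, Pi.sub_apply]
  omega

theorem exists_cone_decomposition [Finite σ] [Finite ι] :
    ∃ k > 0, ∀ (s : ℕ), ∀ a ∈ cone w c (k * s), ∃ L : Multiset (σ →₀ ℕ),
      Multiset.card L = s ∧ (∀ b ∈ L, b ∈ cone w c k) ∧ L.sum ≤ a := by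
  classical
  let deg : (σ →₀ ℕ) × ℕ × (ι → ℕ) →+ ℕ :=
    (AddMonoidHom.fst ℕ (ι → ℕ)).comp (AddMonoidHom.snd (σ →₀ ℕ) (ℕ × (ι → ℕ)))
  obtain ⟨G, hGT, hG⟩ := (slackMonoid w c).exists_finset_sum_le_of_sub_mem
    (fun x hx y hy hxy ↦ sub_mem_slackMonoid w c hx hy hxy) deg
  obtain ⟨k, hk, hkG⟩ := exists_partition_sum_map_eq deg fun g hg ↦ (hGT g hg).2
  refine ⟨k, hk, fun s a ha ↦ ?_⟩
  obtain ⟨S, hSG, hSa, hSdeg⟩ := hG (a, k * s, fun i ↦ weight (w i) a - c i * (k * s))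
    fun i ↦ (Nat.add_sub_of_le (ha i)).symm
  obtain ⟨P, hPcard, hPdeg, rfl⟩ := hkG s S hSG (by rw [← map_multiset_sum]; exact hSdeg)
  refine ⟨P.map fun B ↦ B.sum.1, by simp [hPcard], ?_, ?_⟩
  · simp only [Multiset.mem_map]
    rintro _ ⟨B, hB, rfl⟩ i
    have hBT : B.sum ∈ slackMonoid w c := (slackMonoid w c).multiset_sum_mem B fun g hg ↦
      (hGT g (hSG g (Multiset.mem_of_le (Multiset.le_sum_of_mem hB) hg))).1
    have hBdeg : deg B.sum = k := by rw [map_multiset_sum]; exact hPdeg B hB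
    rw [hBT i]
    exact Nat.le_add_right_of_le (by rw [← hBdeg]; rfl)
  · have hfst := map_multiset_sum (AddMonoidHom.fst (σ →₀ ℕ) (ℕ × (ι → ℕ))) (P.map Multiset.sum)
    rw [Multiset.map_map] at hfst
    rw [← Multiset.join, Multiset.sum_join] at hSa
    exact hfst.symm.trans_le hSa.1

variable {R : Type*} [CommSemiring R]

noncomputable def coneIdeal (d : ℕ) : Ideal (MvPolynomial σ R) :=
  Ideal.span ((fun a ↦ monomial a 1) '' cone w c d)

lemma coneIdeal_eq_iInf (d : ℕ) :
    (coneIdeal w c d : Ideal (MvPolynomial σ R)) = ⨅ i, weightIdeal (w i) (c i * d) := by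
  ext f
  simp only [coneIdeal, mem_span_monomial_image_iff_of_isUpperSet (isUpperSet_cone w c d),
    Submodule.mem_iInf, mem_weightIdeal]
  exact ⟨fun h i a ha ↦ h a ha i, fun h a ha i ↦ h i a ha⟩

lemma coneIdeal_mul_le (d e : ℕ) :
    (coneIdeal w c d * coneIdeal w c e : Ideal (MvPolynomial σ R)) ≤ coneIdeal w c (d + e) := by
  simp only [coneIdeal_eq_iInf, mul_add]
  exact le_iInf fun i ↦
    (Ideal.mul_mono (iInf_le _ i) (iInf_le _ i)).trans (weightIdeal_mul_le _ _)

lemma coneIdeal_pow_le (d s : ℕ) :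
    (coneIdeal w c d : Ideal (MvPolynomial σ R)) ^ s ≤ coneIdeal w c (d * s) := by
  induction s with
  | zero => simp [coneIdeal_eq_iInf, weightIdeal_zero]
  | succ s ih =>
    rw [pow_succ, mul_add_one]
    exact (Ideal.mul_mono_left ih).trans (coneIdeal_mul_le w c _ _)

lemma monomial_sum_mem_pow {I : Ideal (MvPolynomial σ R)}
    (L : Multiset (σ →₀ ℕ)) (hL : ∀ b ∈ L, monomial b 1 ∈ I) :
    monomial L.sum (1 : R) ∈ I ^ Multiset.card L := by
  induction L using Multiset.induction with
  | empty => simp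
  | cons b L ih =>
    rw [Multiset.sum_cons, Multiset.card_cons, pow_succ', ← mul_one (1 : R), ← monomial_mul]
    exact Ideal.mul_mem_mul (hL b (Multiset.mem_cons_self b L))
      (ih fun b' hb' ↦ hL b' (Multiset.mem_cons_of_mem hb'))

lemma coneIdeal_pow_eq {k s : ℕ} (h : ∀ a ∈ cone w c (k * s), ∃ L : Multiset (σ →₀ ℕ),
      Multiset.card L = s ∧ (∀ b ∈ L, b ∈ cone w c k) ∧ L.sum ≤ a) :
    (coneIdeal w c k : Ideal (MvPolynomial σ R)) ^ s = coneIdeal w c (k * s) := by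
  refine le_antisymm (coneIdeal_pow_le w c k s) fun f hf ↦ ?_
  rw [coneIdeal, mem_span_monomial_image_iff_of_isUpperSet (isUpperSet_cone w c _)] at hf
  rw [f.as_sum]
  refine Ideal.sum_mem _ fun a ha ↦ ?_
  obtain ⟨L, rfl, hL, hLa⟩ := h a (hf a ha)
  have hsplit : monomial a (coeff a f) = monomial (a - L.sum) (coeff a f) * monomial L.sum 1 := by
    rw [monomial_mul, mul_one, tsub_add_cancel_of_le hLa]
  rw [hsplit]
  exact Ideal.mul_mem_left _ _
    (monomial_sum_mem_pow L fun b hb ↦ Ideal.subset_span ⟨b, hL b hb, rfl⟩)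

end Cone

open Nat in
lemma exists_exponent_below_face {σ ι : Type*} [Fintype σ] {F : ι → Finset σ}
    (hF : ∀ j, (F j).Nonempty) (i : ι) {T : ℕ} (hT : 0 < T) :
    ∃ a : σ →₀ ℕ, ∑ q ∈ F i, a q + 1 = (#(F i) + 1)! * T ∧
      ∀ j, F j = F i ∨ (#(F j) + 1)! * T ≤ ∑ q ∈ F j, a q := by
  classical
  obtain ⟨p, hp⟩ := hF i
  set d := #(F i) with hd
  have hdT : 0 < d ! * T := Nat.mul_pos (factorial_pos d) hT
  -- Since `(d + 1)! = d * d! + d!`, exponent `d! * T` on each variable of `F i` clears every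
  -- proper face, and the surplus `d! * T - 1` on `p` lifts the `F i`-weight to
  -- `(d + 1)! * T - 1`; variables outside `F i` get an exponent that clears every other face.
  let a : σ →₀ ℕ := Finsupp.equivFunOnFinite.symm fun q ↦
    if q ∈ F i then d ! * T + if q = p then d ! * T - 1 else 0 else (Fintype.card σ + 1)! * T
  have ha_in : ∀ q ∈ F i, a q = d ! * T + if q = p then d ! * T - 1 else 0 := fun q hq ↦ by
    simp [a, hq]
  refine ⟨a, ?_, fun j ↦ or_iff_not_imp_left.mpr fun hji ↦ ?_⟩
  · rw [sum_congr rfl ha_in, sum_add_distrib, sum_const, smul_eq_mul, sum_ite_eq' _ _ _,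
      if_pos hp, ← hd, factorial_succ]
    have : (d + 1) * d ! * T = d * (d ! * T) + d ! * T := by ring
    omega
  by_cases hsub : F j ⊆ F i
  · have hcard : #(F j) + 1 ≤ d := card_lt_card (Finset.ssubset_iff_subset_ne.mpr ⟨hsub, hji⟩)
    calc (#(F j) + 1)! * T ≤ d ! * T := Nat.mul_le_mul_right T (factorial_le hcard)
      _ ≤ #(F j) * (d ! * T) := Nat.le_mul_of_pos_left _ (card_pos.mpr (hF j))
      _ = ∑ q ∈ F j, d ! * T := by rw [sum_const, smul_eq_mul]
      _ ≤ ∑ q ∈ F j, a q :=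
        sum_le_sum fun q hq ↦ (ha_in q (hsub hq)).symm ▸ Nat.le_add_right _ _
  · obtain ⟨q, hqj, hqi⟩ := not_subset.mp hsub
    calc (#(F j) + 1)! * T ≤ (Fintype.card σ + 1)! * T :=
          Nat.mul_le_mul_right T (factorial_le (Nat.succ_le_succ (card_le_univ _)))
      _ = a q := by simp [a, hqi]
      _ ≤ ∑ q ∈ F j, a q := single_le_sum (fun _ _ ↦ Nat.zero_le _) hqj

lemma IsNonzeroMonomialPrime.exists_finset {K : Type*} [Field K] {n : ℕ}
    {P : Ideal (MvPolynomial (Fin n) K)} (hP : IsNonzeroMonomialPrime P) :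
    ∃ F : Finset (Fin n), F.Nonempty ∧ P = weightIdeal ((F : Set (Fin n)).indicator 1) 1 := by
  classical
  obtain ⟨F, hF, rfl⟩ := hP
  exact ⟨F.toFinset, Set.toFinset_nonempty.mpr hF, by
    rw [← span_X_image_eq_weightIdeal, Set.coe_toFinset]⟩

/-- Any finite collection of nonzero monomial prime ideals is the stable set of
associated prime ideals `Ass^∞(I)` of some monomial ideal `I`. -/
theorem stmt3 {K : Type*} [Field K] (n m : ℕ)
    (P : Fin m → Ideal (MvPolynomial (Fin n) K))
    (hP : ∀ i, IsNonzeroMonomialPrime (P i)) :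
    ∃ I : Ideal (MvPolynomial (Fin n) K), IsMonomialIdeal I ∧
      ∃ s₀ : ℕ, ∀ s ≥ s₀,
        associatedPrimes (MvPolynomial (Fin n) K) (MvPolynomial (Fin n) K ⧸ I ^ s) =
          Set.range P := by
  choose F hF hPF using fun i ↦ (hP i).exists_finset
  set w : Fin m → Fin n → ℕ := fun j ↦ (F j : Set (Fin n)).indicator 1
  set c : Fin m → ℕ := fun j ↦ (#(F j) + 1).factorial
  obtain ⟨k, hk, hdec⟩ := exists_cone_decomposition w c
  refine ⟨coneIdeal w c k, ⟨cone w c k, rfl⟩, 1, fun s hs ↦ ?_⟩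
  have hT : 0 < k * s := Nat.mul_pos hk hs
  have ht : ∀ j, c j * (k * s) ≠ 0 := fun j ↦ (Nat.mul_pos (Nat.factorial_pos _) hT).ne'
  rw [coneIdeal_pow_eq w c (hdec s), coneIdeal_eq_iInf]
  refine subset_antisymm (fun p hp ↦ ?_) ?_
  · obtain ⟨j, rfl⟩ :=
      associatedPrimes_quotient_iInf_subset (fun j ↦ isPrimary_weightIdeal (ht j)) hp
    exact ⟨j, (hPF j).trans (radical_weightIdeal (ht j)).symm⟩
  · rintro _ ⟨i, rfl⟩
    obtain ⟨a, hai, haj⟩ := exists_exponent_below_face hF i hT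
    rw [hPF i]
    refine weightIdeal_one_mem_associatedPrimes (a := a) ?_ fun j ↦ ?_
    · simpa [w, c, Finsupp.weight_indicator_one, mul_assoc] using hai
    · rcases haj j with h | h
      · exact Or.inr ⟨by simp [w, h], by simp [c, h]⟩
      · exact Or.inl (by simpa [w, c, Finsupp.weight_indicator_one, mul_assoc] using h)
end

section
/- Let K be a field and S = K[x_1, ..., x_n] the polynomial ring with n ≥ 2. There is no monomial ideal I ⊆ S such that the set of associated primes of S/I equals {(x_1), (x_2)} and the set of associated primes of S/I^s equals {(x_1), (x_2), (x_1, x_2)} for all sufficiently large s; that is, no monomial ideal I satisfies Ass(I) = {(x_1), (x_2)} and Ass^∞(I) = {(x_1), (x_2), (x_1, x_2)}. -/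
/-!
If no associated prime of `S/I` contains two distinct variables, then a monomial outside `I`
is pushed into `I` by at most one variable. For exponents `a, b` of monomials in `I`, walking up
from `a ⊓ b` towards `a` one enters the exponent set of `I` at some `v`, along a variable `x_k`
with `b_k ≤ v_k`; raising the other exponents of `v` up to those of `b` then never enters it,
yet reaches `v ⊔ b`, a multiple of `b`. So the exponent set is closed under `⊓`, has a least
element, and a monomial ideal with `Ass(I) = {(x_1), (x_2)}` is principal. Then so is `I^s = (f^s)`, and `(x_1, x_2)` is not
associated to a principal ideal `(g)` of a domain: `g ∣ x_1 ν` and `g ∣ x_2 ν` force `g ∣ ν`,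
since `x_1` is prime and does not divide `x_2`.
-/

open MvPolynomial

section AssociatedPrimes

variable {R : Type*} [CommRing R] {I P : Ideal R}

theorem mem_colon_bot_mk_iff {ν x : R} :
    x ∈ (⊥ : Submodule R (R ⧸ I)).colon {Ideal.Quotient.mk I ν} ↔ x * ν ∈ I := by
  rw [Submodule.mem_colon_singleton, Submodule.mem_bot, Algebra.smul_def,
    Ideal.Quotient.algebraMap_eq, ← map_mul, Ideal.Quotient.eq_zero_iff_mem]

variable [IsNoetherianRing R]

theorem exists_notMem_of_mem_associatedPrimes_quotient
    (hP : P ∈ associatedPrimes R (R ⧸ I)) : ∃ ν ∉ I, ∀ x ∈ P, x * ν ∈ I := by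
  obtain ⟨hprime, m, hm⟩ := isAssociatedPrime_iff.mp hP
  obtain ⟨ν, rfl⟩ := Ideal.Quotient.mk_surjective m
  refine ⟨ν, fun hν => hprime.ne_top ?_, fun x hx => ?_⟩
  · rwa [hm, Ideal.eq_top_iff_one, mem_colon_bot_mk_iff, one_mul]
  · rwa [hm, mem_colon_bot_mk_iff] at hx

theorem exists_mem_associatedPrimes_quotient_of_notMem {ν : R}
    (hν : ν ∉ I) : ∃ P ∈ associatedPrimes R (R ⧸ I), ∀ x, x * ν ∈ I → x ∈ P := by
  obtain ⟨P, hP, hle⟩ := exists_le_isAssociatedPrime_of_isNoetherianRing R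
    (Ideal.Quotient.mk I ν) (mt Ideal.Quotient.eq_zero_iff_mem.mp hν)
  exact ⟨P, hP, fun x hx => hle (mem_colon_bot_mk_iff.mpr hx)⟩

end AssociatedPrimes

namespace Finsupp

variable {σ : Type*}

theorem lt_add_single_one (u : σ →₀ ℕ) (j : σ) : u < u + single j 1 :=
  lt_add_of_pos_right u (pos_iff_ne_zero.mpr (single_ne_zero.mpr one_ne_zero))

theorem exists_add_single_eq_of_lt {v w : σ →₀ ℕ} (h : v < w) :
    ∃ j u, v ≤ u ∧ u + single j 1 = w := by
  classical
  obtain ⟨j, hj⟩ : ∃ j, v j < w j := by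
    by_contra! hle
    exact h.not_ge fun j => hle j
  refine ⟨j, w - single j 1, fun i => ?_, tsub_add_cancel_of_le ?_⟩
  · rw [tsub_apply, single_apply]
    have := h.le i
    split_ifs with hji <;> [subst hji; skip] <;> omega
  · rw [single_le_iff]; omega

end Finsupp

open Finsupp

section ExponentSets

variable {σ : Type*} {U : Set (σ →₀ ℕ)}

/-- The shadow, on the exponent set of a monomial ideal, of the condition that no associated
prime contains two distinct variables. -/
def NoTwoVariableCorner (U : Set (σ →₀ ℕ)) : Prop :=
  ∀ v ∉ U, ∀ j k, v + single j 1 ∈ U → v + single k 1 ∈ U → j = k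

theorem exists_add_single_mem_of_notMem {c a : σ →₀ ℕ} (hc : c ∉ U)
    (hca : c ≤ a) (ha : a ∈ U) :
    ∃ v k, c ≤ v ∧ v + single k 1 ≤ a ∧ v ∉ U ∧ v + single k 1 ∈ U := by
  induction a using WellFoundedLT.induction with
  | _ a ih =>
    obtain ⟨k, u, hcu, rfl⟩ := exists_add_single_eq_of_lt
      (lt_of_le_of_ne hca fun h => hc (h ▸ ha))
    by_cases hu : u ∈ U
    · obtain ⟨v, j, hcv, hva, hv⟩ := ih u (lt_add_single_one u _) hcu hu
      exact ⟨v, j, hcv, hva.trans le_self_add, hv⟩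
    · exact ⟨u, k, hcu, le_rfl, hu, ha⟩

theorem NoTwoVariableCorner.notMem_of_le_of_apply_eq (hU : IsUpperSet U)
    (hcorner : NoTwoVariableCorner U)
    {v w : σ →₀ ℕ} {k : σ} (hv : v ∉ U) (hvk : v + single k 1 ∈ U) (hvw : v ≤ w)
    (hwk : w k = v k) : w ∉ U := by
  induction w using WellFoundedLT.induction with
  | _ w ih =>
    rcases hvw.eq_or_lt with rfl | hlt
    · exact hv
    obtain ⟨j, u, hvu, rfl⟩ := exists_add_single_eq_of_lt hlt
    have hjk : j ≠ k := by
      rintro rfl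
      have := hvu j
      simp only [Finsupp.add_apply, single_eq_same] at hwk
      omega
    have huk : u k = v k := by simpa [single_eq_of_ne' hjk] using hwk
    have hu : u ∉ U := ih u (lt_add_single_one u _) hvu huk
    exact fun hw => hjk (hcorner u hu j k hw (hU ((add_le_add_iff_right _).mpr hvu) hvk))

theorem NoTwoVariableCorner.inf_mem (hU : IsUpperSet U) (hcorner : NoTwoVariableCorner U)
    {a b : σ →₀ ℕ} (ha : a ∈ U) (hb : b ∈ U) : a ⊓ b ∈ U := by
  by_contra hab
  obtain ⟨v, k, hv, hva, hvU, hvkU⟩ := exists_add_single_mem_of_notMem hab inf_le_left ha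
  have hbv : b k ≤ v k := by
    have h1 := hv k
    have h2 := hva k
    simp only [inf_apply, Finsupp.add_apply, single_eq_same] at h1 h2
    omega
  exact hcorner.notMem_of_le_of_apply_eq hU hvU hvkU le_sup_left (by simp [hbv])
    (hU le_sup_right hb)

theorem NoTwoVariableCorner.exists_isLeast (hU : IsUpperSet U) (hcorner : NoTwoVariableCorner U)
    (hne : U.Nonempty) : ∃ m, IsLeast U m := by
  obtain ⟨m, hm, hmin⟩ := wellFounded_lt.has_min U hne
  exact ⟨m, hm, fun a ha =>
    inf_eq_left.mp (inf_le_left.eq_or_lt.resolve_right (hmin _ (hcorner.inf_mem hU hm ha)))⟩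

end ExponentSets

theorem dvd_of_dvd_mul_of_dvd_mul {R : Type*} [CommRing R] [IsDomain R] {p b f ν : R}
    (hp : Prime p) (hb : ¬ p ∣ b) (hpν : f ∣ p * ν) (hbν : f ∣ b * ν) : f ∣ ν := by
  obtain ⟨r, hr⟩ := hpν
  obtain ⟨q, hq⟩ := hbν
  rcases eq_or_ne f 0 with rfl | hf
  · simpa [hp.ne_zero] using hr
  have hbr : b * r = p * q := mul_left_cancel₀ hf (by linear_combination p * hq - b * hr)
  obtain ⟨t, rfl⟩ := (hp.dvd_or_dvd ⟨q, hbr⟩).resolve_left hb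
  exact ⟨t, mul_left_cancel₀ hp.ne_zero (by linear_combination hr)⟩

theorem notMem_associatedPrimes_quotient_span_singleton {R : Type*} [CommRing R] [IsDomain R]
    [IsNoetherianRing R] {P : Ideal R} {p b : R} (hp : Prime p) (hb : ¬ p ∣ b) (hpP : p ∈ P)
    (hbP : b ∈ P) (f : R) : P ∉ associatedPrimes R (R ⧸ Ideal.span {f}) := fun hP => by
  obtain ⟨ν, hν, hcolon⟩ := exists_notMem_of_mem_associatedPrimes_quotient hP
  simp only [Ideal.mem_span_singleton] at hν hcolon
  exact hν (dvd_of_dvd_mul_of_dvd_mul hp hb (hcolon p hpP) (hcolon b hbP))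

namespace MvPolynomial

variable {σ R : Type*} [CommRing R]

def monomialExponents (I : Ideal (MvPolynomial σ R)) : Set (σ →₀ ℕ) :=
  {a | monomial a (1 : R) ∈ I}

theorem isUpperSet_monomialExponents (I : Ideal (MvPolynomial σ R)) :
    IsUpperSet (monomialExponents I) := fun _ _ hab ha =>
  I.mem_of_dvd (monomial_dvd_monomial.mpr ⟨Or.inr hab, dvd_rfl⟩) ha

theorem noTwoVariableCorner_monomialExponents [Finite σ] [IsNoetherianRing R]
    {I : Ideal (MvPolynomial σ R)}
    (hAss : ∀ P ∈ associatedPrimes (MvPolynomial σ R) (MvPolynomial σ R ⧸ I),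
      ∀ j k, X j ∈ P → X k ∈ P → j = k) :
    NoTwoVariableCorner (monomialExponents I) := by
  intro v hv j k hj hk
  obtain ⟨P, hP, hcolon⟩ := exists_mem_associatedPrimes_quotient_of_notMem hv
  have hX : ∀ i, X i * monomial v (1 : R) = monomial (v + Finsupp.single i 1) 1 := fun i => by
    rw [X, monomial_mul, one_mul, add_comm]
  exact hAss P hP j k (hcolon _ ((hX j).symm ▸ hj)) (hcolon _ ((hX k).symm ▸ hk))

end MvPolynomial

theorem IsMonomialIdeal.exists_eq_span_singleton {K : Type*} [Field K] {n : ℕ}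
    {I : Ideal (MvPolynomial (Fin n) K)} (hI : IsMonomialIdeal I)
    (hAss : ∀ P ∈ associatedPrimes (MvPolynomial (Fin n) K) (MvPolynomial (Fin n) K ⧸ I),
      ∀ j k, X j ∈ P → X k ∈ P → j = k) :
    ∃ f, I = Ideal.span {f} := by
  obtain ⟨A, rfl⟩ := hI
  have hA : A ⊆ monomialExponents (Ideal.span ((fun a => monomial a (1 : K)) '' A)) :=
    fun a ha => Ideal.subset_span ⟨a, ha, rfl⟩
  rcases A.eq_empty_or_nonempty with rfl | hne
  · exact ⟨0, by simp⟩
  obtain ⟨m, hm, hmin⟩ := (noTwoVariableCorner_monomialExponents hAss).exists_isLeast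
    (isUpperSet_monomialExponents _) (hne.mono hA)
  refine ⟨monomial m 1, le_antisymm (Ideal.span_le.mpr ?_)
    (Ideal.span_le.mpr (Set.singleton_subset_iff.mpr hm))⟩
  rintro _ ⟨a, ha, rfl⟩
  exact Ideal.mem_span_singleton.mpr (monomial_one_dvd_monomial_one.mpr (hmin (hA ha)))

/-- There is no monomial ideal `I` in `S = K[x_1, ..., x_n]` (`n ≥ 2`) with
`Ass(I) = {(x_1), (x_2)}` and `Ass^∞(I) = {(x_1), (x_2), (x_1, x_2)}`. -/
theorem stmt8 {K : Type*} [Field K] (n : ℕ) (hn : 2 ≤ n) :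
    ¬ ∃ I : Ideal (MvPolynomial (Fin n) K), IsMonomialIdeal I ∧
      associatedPrimes (MvPolynomial (Fin n) K) (MvPolynomial (Fin n) K ⧸ I) =
        ({Ideal.span {X (⟨0, by omega⟩ : Fin n)},
          Ideal.span {X (⟨1, by omega⟩ : Fin n)}} :
            Set (Ideal (MvPolynomial (Fin n) K))) ∧
      ∃ s₀ : ℕ, ∀ s ≥ s₀,
        associatedPrimes (MvPolynomial (Fin n) K) (MvPolynomial (Fin n) K ⧸ I ^ s) =
          ({Ideal.span {X (⟨0, by omega⟩ : Fin n)},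
            Ideal.span {X (⟨1, by omega⟩ : Fin n)},
            Ideal.span {X (⟨0, by omega⟩ : Fin n), X (⟨1, by omega⟩ : Fin n)}} :
              Set (Ideal (MvPolynomial (Fin n) K))) := by
  rintro ⟨I, hI, hAss, s₀, hAssPow⟩
  obtain ⟨f, rfl⟩ := IsMonomialIdeal.exists_eq_span_singleton hI fun P hP j k hj hk => by
    rw [hAss] at hP
    rcases hP with rfl | rfl <;>
      simp only [Ideal.mem_span_singleton, X_dvd_X] at hj hk <;> exact hj.symm.trans hk
  have hmem := (Set.ext_iff.mp (hAssPow s₀ le_rfl) _).mpr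
    (Set.mem_insert_of_mem _ (Set.mem_insert_of_mem _ (Set.mem_singleton _)))
  rw [Ideal.span_singleton_pow] at hmem
  exact notMem_associatedPrimes_quotient_span_singleton X_prime (by simp [Fin.ext_iff])
    (Ideal.subset_span (Set.mem_insert _ _))
    (Ideal.subset_span (Set.mem_insert_of_mem _ (Set.mem_singleton _))) _ hmem
end

section
/- Let K be a field, S = K[x_1, ..., x_n] the polynomial ring, I ⊆ S a monomial ideal with minimal monomial generating set G(I), and P = P_F = ({x_i : i ∈ F}) a monomial prime ideal. Let S' = K[x_i : i ∈ F] and let J ⊆ S' be the ideal generated by the monomials u*, u ∈ G(I), where u* is obtained from u by substituting x_j ↦ 1 for every j ∉ F. Then for every positive integer s, P is an associated prime of S/I^s if and only if the maximal graded ideal ({x_i : i ∈ F}) of S' is an associated prime of S'/J^s. -/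
/-!
Associated primes of a monomial ideal `I_T = (x^t : t ∈ T)` are detected by monomials: a
monomial prime `P_F` lies in `Ass(S/I_T)` iff `P_F = (I_T : x^e)` for some exponent `e`. Such an
`e` exists iff its restriction `c` to `F` is a socle exponent of the restricted set `T|_F`,
i.e. `x^c ∉ I_{T|_F}` but `x_i x^c ∈ I_{T|_F}` for all `i ∈ F`: taking `e` large outside `F`
makes the variables outside `F` behave like units. For `F` the full set of variables this is
the criterion for the maximal ideal, and since `I^s = I_{s • A}` and `J^s = I_{(s • A)|_F}`,
both sides of the theorem reduce to the same socle condition.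
-/

open MvPolynomial
open scoped Pointwise

theorem Finsupp.le_iff_subtypeDomain_le_and {σ M : Type*} [Zero M] [LE M] (F : Set σ)
    (f g : σ →₀ M) :
    f ≤ g ↔ f.subtypeDomain (· ∈ F) ≤ g.subtypeDomain (· ∈ F) ∧ ∀ j ∉ F, f j ≤ g j := by
  simp only [Finsupp.le_def, Finsupp.subtypeDomain_apply, Subtype.forall]
  exact ⟨fun h => ⟨fun j _ => h j, fun j _ => h j⟩,
    fun h j => (em (j ∈ F)).elim (h.1 j) (h.2 j)⟩

theorem Finsupp.exists_subtypeDomain_eq_forall_le {σ : Type*} (F : Set σ) (c : F →₀ ℕ)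
    (S : Finset (σ →₀ ℕ)) :
    ∃ e : σ →₀ ℕ, e.subtypeDomain (· ∈ F) = c ∧ ∀ t ∈ S, ∀ j ∉ F, t j ≤ e j := by
  classical
  refine ⟨c.extendDomain + (∑ t ∈ S, t).filter (· ∉ F), ?_, fun t ht j hj => ?_⟩
  · ext j
    simp [j.2]
  · simp only [Finsupp.add_apply, Finsupp.filter_apply, if_pos hj, Finsupp.finsetSum_apply]
    exact (Finset.single_le_sum (f := fun t : σ →₀ ℕ => t j) (by simp) ht).trans le_add_self

theorem Ideal.Quotient.mem_colon_bot_singleton_mk_iff {A : Type*} [CommRing A]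
    {I : Ideal A} {r a : A} :
    r ∈ (⊥ : Submodule A (A ⧸ I)).colon {Ideal.Quotient.mk I a} ↔ r * a ∈ I := by
  rw [Submodule.mem_colon_singleton, Submodule.mem_bot, Algebra.smul_def,
    Ideal.Quotient.algebraMap_eq, ← map_mul, Ideal.Quotient.eq_zero_iff_mem]

namespace MvPolynomial

variable {R σ : Type*} [CommRing R]

variable (R) in
noncomputable def monomialIdeal (T : Set (σ →₀ ℕ)) : Ideal (MvPolynomial σ R) :=
  Ideal.span ((fun a => monomial a 1) '' T)

theorem monomialIdeal_pow (T : Set (σ →₀ ℕ)) (s : ℕ) :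
    monomialIdeal R T ^ s = monomialIdeal R (s • T) := by
  induction s with
  | zero => simp [monomialIdeal]
  | succ s ih =>
    rw [pow_succ', ih, succ_nsmul', monomialIdeal, monomialIdeal, monomialIdeal,
      Ideal.span_mul_span', ← Set.image2_mul, ← Set.image2_add, Set.image_image2,
      Set.image2_image_left, Set.image2_image_right]
    simp only [monomial_mul, one_mul]

theorem mul_monomial_mem_monomialIdeal_iff {T : Set (σ →₀ ℕ)} {p : MvPolynomial σ R}
    {e : σ →₀ ℕ} :
    p * monomial e 1 ∈ monomialIdeal R T ↔ ∀ u ∈ p.support, ∃ t ∈ T, t ≤ u + e := by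
  have hsupp : (p * monomial e 1).support = p.support.map (addRightEmbedding e) :=
    AddMonoidAlgebra.support_coeff_mul_single p 1 (by simp) e
  simp [monomialIdeal, mem_ideal_span_monomial_image, hsupp]

theorem isPrime_span_X_image [IsDomain R] (F : Set σ) :
    (Ideal.span (X '' F : Set (MvPolynomial σ R))).IsPrime := by
  classical
  set P := Ideal.span (X '' F : Set (MvPolynomial σ R))
  let kill : MvPolynomial σ R →ₐ[R] MvPolynomial σ R := aeval fun i => if i ∈ F then 0 else X i
  suffices P = RingHom.ker kill from this ▸ RingHom.ker_isPrime _
  have hmk : (Ideal.Quotient.mkₐ R P).comp kill = Ideal.Quotient.mkₐ R P := by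
    refine algHom_ext fun i => ?_
    by_cases hi : i ∈ F
    · simpa [kill, hi, eq_comm (a := (0 : MvPolynomial σ R ⧸ P)), Ideal.Quotient.eq_zero_iff_mem]
        using Ideal.subset_span (Set.mem_image_of_mem X hi)
    · simp [kill, hi]
  refine le_antisymm (Ideal.span_le.mpr ?_) fun p hp => ?_
  · rintro _ ⟨i, hi, rfl⟩
    simp [kill, hi]
  · rw [← Ideal.Quotient.eq_zero_iff_mem, ← Ideal.Quotient.mkₐ_eq_mk R, ← hmk]
    simp [RingHom.mem_ker.mp hp]

/-- `x^c ∉ I_T` but `x_i x^c ∈ I_T` for every variable: `x^c` is a socle monomial of `S ⧸ I_T`. -/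
def IsSocleExponent {ι : Type*} (T : Set (ι →₀ ℕ)) (c : ι →₀ ℕ) : Prop :=
  (∀ t ∈ T, ¬ t ≤ c) ∧ ∀ i, ∃ t ∈ T, t ≤ c + Finsupp.single i 1

theorem idealOfVars_mem_associatedPrimes_iff [Finite σ] [IsDomain R] [IsNoetherianRing R]
    (T : Set (σ →₀ ℕ)) :
    idealOfVars σ R ∈
        associatedPrimes (MvPolynomial σ R) (MvPolynomial σ R ⧸ monomialIdeal R T) ↔
      ∃ c, IsSocleExponent T c := by
  rw [AssociatedPrimes.mem_iff, isAssociatedPrime_iff]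
  constructor
  · rintro ⟨hprime, x, hx⟩
    obtain ⟨f, rfl⟩ := Ideal.Quotient.mk_surjective x
    have hann (r) : r ∈ idealOfVars σ R ↔ r * f ∈ monomialIdeal R T := by
      rw [hx, Ideal.Quotient.mem_colon_bot_singleton_mk_iff]
    have hf : f ∉ monomialIdeal R T := fun hf =>
      hprime.ne_top ((Ideal.eq_top_iff_one _).mpr ((hann 1).mpr (by rwa [one_mul])))
    obtain ⟨u, hu, hut⟩ : ∃ u ∈ f.support, ∀ t ∈ T, ¬ t ≤ u := by
      simpa [monomialIdeal, mem_ideal_span_monomial_image] using hf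
    refine ⟨u, hut, fun i => mul_monomial_mem_monomialIdeal_iff.mp ?_ u hu⟩
    rw [mul_comm]
    exact (hann _).mp (Ideal.subset_span (Set.mem_range_self i))
  · rintro ⟨c, hcT, hci⟩
    have hprime : (idealOfVars σ R).IsPrime := by
      simpa [idealOfVars, Set.image_univ] using isPrime_span_X_image (R := R) (Set.univ : Set σ)
    refine ⟨hprime, Ideal.Quotient.mk _ (monomial c 1), Ideal.ext fun r => ?_⟩
    rw [Ideal.Quotient.mem_colon_bot_singleton_mk_iff, mul_monomial_mem_monomialIdeal_iff,
      idealOfVars, ← Set.image_univ, mem_ideal_span_X_image]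
    refine forall₂_congr fun u _ => ⟨fun ⟨i, _, hui⟩ => ?_, fun ⟨t, ht, htu⟩ => ?_⟩
    · obtain ⟨t, ht, htc⟩ := hci i
      refine ⟨t, ht, htc.trans ?_⟩
      rw [add_comm u]
      gcongr
      exact Finsupp.single_le_iff.mpr (Nat.one_le_iff_ne_zero.mpr hui)
    · by_contra! hu
      have hu0 : u = 0 := Finsupp.ext fun i => hu i trivial
      exact hcT t ht (by simpa [hu0] using htu)

theorem exists_isSocleExponent_of_span_X_image_eq_colon [Nontrivial R] {F : Set σ}
    {T : Set (σ →₀ ℕ)} {f : MvPolynomial σ R}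
    (hf : Ideal.span (X '' F : Set (MvPolynomial σ R)) =
      (⊥ : Submodule _ (MvPolynomial σ R ⧸ monomialIdeal R T)).colon {Ideal.Quotient.mk _ f}) :
    ∃ c, IsSocleExponent (Finsupp.subtypeDomain (· ∈ F) '' T) c := by
  have hann (r) :
      r ∈ Ideal.span (X '' F : Set (MvPolynomial σ R)) ↔ r * f ∈ monomialIdeal R T := by
    rw [hf, Ideal.Quotient.mem_colon_bot_singleton_mk_iff]
  classical
  obtain ⟨u, hu, hut⟩ : ∃ u ∈ f.support,
      ∀ t ∈ T, ¬ t.subtypeDomain (· ∈ F) ≤ u.subtypeDomain (· ∈ F) := by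
    -- Otherwise some monomial in the variables outside `F` would annihilate `f`.
    by_contra! h
    choose g hgT hgu using h
    obtain ⟨e, he, hge⟩ := Finsupp.exists_subtypeDomain_eq_forall_le F 0
      (f.support.attach.image fun u : {u // u ∈ f.support} => g u.1 u.2)
    have hfe : monomial e 1 * f ∈ monomialIdeal R T := by
      rw [mul_comm, mul_monomial_mem_monomialIdeal_iff]
      intro u hu
      refine ⟨g u hu, hgT u hu,
        (Finsupp.le_iff_subtypeDomain_le_and F _ _).mpr ⟨?_, fun j hj => ?_⟩⟩
      · rw [Finsupp.subtypeDomain_add, he, add_zero]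
        exact hgu u hu
      · exact (hge _ (Finset.mem_image_of_mem _ (Finset.mem_attach _ ⟨u, hu⟩)) j hj).trans
          le_add_self
    obtain ⟨i, hi, hei⟩ :=
      mem_ideal_span_X_image.mp ((hann _).mpr hfe) e (by simp [coeff_monomial])
    exact hei (by simpa using DFunLike.congr_fun he ⟨i, hi⟩)
  refine ⟨_, Set.forall_mem_image.mpr hut, fun i => ?_⟩
  have hXi : f * monomial (Finsupp.single (i : σ) 1) 1 ∈ monomialIdeal R T := by
    rw [mul_comm]
    exact (hann _).mp (Ideal.subset_span (Set.mem_image_of_mem X i.2))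
  obtain ⟨t, ht, htu⟩ := mul_monomial_mem_monomialIdeal_iff.mp hXi u hu
  refine ⟨_, Set.mem_image_of_mem _ ht, ?_⟩
  have hρ := ((Finsupp.le_iff_subtypeDomain_le_and F _ _).mp htu).1
  rwa [Finsupp.subtypeDomain_add, ← Finsupp.extendDomain_single,
    Finsupp.subtypeDomain_extendDomain] at hρ

theorem exists_span_X_image_eq_colon_of_isSocleExponent [Finite σ] {F : Set σ}
    {T : Set (σ →₀ ℕ)} {c : F →₀ ℕ}
    (hc : IsSocleExponent (Finsupp.subtypeDomain (· ∈ F) '' T) c) :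
    ∃ e : σ →₀ ℕ, Ideal.span (X '' F : Set (MvPolynomial σ R)) =
      (⊥ : Submodule _ (MvPolynomial σ R ⧸ monomialIdeal R T)).colon
        {Ideal.Quotient.mk _ (monomial e 1)} := by
  classical
  obtain ⟨hcT, hci⟩ := hc
  choose t htT htc using fun i => Set.exists_mem_image.mp (hci i)
  have := Fintype.ofFinite F
  obtain ⟨e, he, hte⟩ := Finsupp.exists_subtypeDomain_eq_forall_le F c (Finset.univ.image t)
  refine ⟨e, Ideal.ext fun r => ?_⟩
  rw [Ideal.Quotient.mem_colon_bot_singleton_mk_iff, mul_monomial_mem_monomialIdeal_iff,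
    mem_ideal_span_X_image]
  refine forall₂_congr fun u _ => ⟨fun ⟨i, hi, hui⟩ => ?_, fun ⟨s, hs, hsu⟩ => ?_⟩
  · refine ⟨t ⟨i, hi⟩, htT _, (Finsupp.le_iff_subtypeDomain_le_and F _ _).mpr ⟨?_, fun j hj =>
      (hte _ (Finset.mem_image_of_mem _ (Finset.mem_univ _)) j hj).trans le_add_self⟩⟩
    rw [Finsupp.subtypeDomain_add, he, add_comm]
    refine (htc _).trans ?_
    gcongr
    exact Finsupp.single_le_iff.mpr (Nat.one_le_iff_ne_zero.mpr hui)
  · by_contra! hu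
    have hu0 : u.subtypeDomain (· ∈ F) = 0 := Finsupp.ext fun i => hu i i.2
    have hsc := ((Finsupp.le_iff_subtypeDomain_le_and F _ _).mp hsu).1
    rw [Finsupp.subtypeDomain_add, hu0, he, zero_add] at hsc
    exact hcT _ (Set.mem_image_of_mem _ hs) hsc

theorem span_X_image_mem_associatedPrimes_iff [Finite σ] [IsDomain R] [IsNoetherianRing R]
    (F : Set σ) (T : Set (σ →₀ ℕ)) :
    Ideal.span (X '' F) ∈
        associatedPrimes (MvPolynomial σ R) (MvPolynomial σ R ⧸ monomialIdeal R T) ↔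
      ∃ c, IsSocleExponent (Finsupp.subtypeDomain (· ∈ F) '' T) c := by
  rw [AssociatedPrimes.mem_iff, isAssociatedPrime_iff]
  constructor
  · rintro ⟨-, x, hx⟩
    obtain ⟨f, rfl⟩ := Ideal.Quotient.mk_surjective x
    exact exists_isSocleExponent_of_span_X_image_eq_colon hx
  · rintro ⟨c, hc⟩
    obtain ⟨e, he⟩ := exists_span_X_image_eq_colon_of_isSocleExponent (R := R) hc
    exact ⟨isPrime_span_X_image F, _, he⟩

end MvPolynomial

theorem stmt10_general {K : Type*} [Field K] (n : ℕ)
    (I : Ideal (MvPolynomial (Fin n) K)) (A : Set (Fin n →₀ ℕ))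
    (hgen : I = Ideal.span
      ((fun a => (monomial a (1 : K) : MvPolynomial (Fin n) K)) '' A))
    (F : Set (Fin n)) (P : Ideal (MvPolynomial (Fin n) K))
    (hPF : P = Ideal.span ((X : Fin n → MvPolynomial (Fin n) K) '' F))
    (J : Ideal (MvPolynomial {i : Fin n // i ∈ F} K))
    (hJ : J = Ideal.span ((fun a =>
      (monomial (a.subtypeDomain (· ∈ F)) (1 : K) :
        MvPolynomial {i : Fin n // i ∈ F} K)) '' A)) :
    ∀ s : ℕ, 0 < s →
      (P ∈ associatedPrimes (MvPolynomial (Fin n) K)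
          (MvPolynomial (Fin n) K ⧸ I ^ s) ↔
        Ideal.span (Set.range (X : {i : Fin n // i ∈ F} →
            MvPolynomial {i : Fin n // i ∈ F} K)) ∈
          associatedPrimes (MvPolynomial {i : Fin n // i ∈ F} K)
            (MvPolynomial {i : Fin n // i ∈ F} K ⧸ J ^ s)) := by
  intro s _
  have hIs : I ^ s = monomialIdeal K (s • A) := by
    rw [hgen]
    exact monomialIdeal_pow A s
  have hJs : J ^ s =
      monomialIdeal K (Finsupp.subtypeDomainAddMonoidHom (p := (· ∈ F)) '' (s • A)) := by
    rw [hJ, ← Set.image_image (fun a => monomial a (1 : K)), Set.image_nsmul]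
    exact monomialIdeal_pow _ s
  rw [hPF, hIs, hJs, span_X_image_mem_associatedPrimes_iff,
    ← idealOfVars, idealOfVars_mem_associatedPrimes_iff]
  rfl

/-- Given a monomial ideal `I ⊆ S = K[x_1, ..., x_n]` with minimal monomial generating
set `G(I)` (encoded by the set `A` of exponent vectors, no one dividing another), and a
monomial prime ideal `P = P_F`, let `J` be the ideal of `S' = K[x_i : i ∈ F]` generated
by the monomials `u*`, `u ∈ G(I)`, obtained by substituting `x_j ↦ 1` for `j ∉ F`
(i.e. by restricting the exponent vectors to `F`).  Then for every positive integer `s`,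
`P ∈ Ass(S/I^s)` if and only if the maximal graded ideal `({x_i : i ∈ F})` of `S'`
belongs to `Ass(S'/J^s)`. -/
theorem stmt10 {K : Type*} [Field K] (n : ℕ)
    (I : Ideal (MvPolynomial (Fin n) K)) (A : Set (Fin n →₀ ℕ))
    (hgen : I = Ideal.span
      ((fun a => (monomial a (1 : K) : MvPolynomial (Fin n) K)) '' A))
    (hmin : ∀ a ∈ A, ∀ b ∈ A, a ≠ b → ¬ b ≤ a)
    (F : Set (Fin n)) (P : Ideal (MvPolynomial (Fin n) K))
    (hPF : P = Ideal.span ((X : Fin n → MvPolynomial (Fin n) K) '' F))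
    (J : Ideal (MvPolynomial {i : Fin n // i ∈ F} K))
    (hJ : J = Ideal.span ((fun a =>
      (monomial (a.subtypeDomain (· ∈ F)) (1 : K) :
        MvPolynomial {i : Fin n // i ∈ F} K)) '' A)) :
    ∀ s : ℕ, 0 < s →
      (P ∈ associatedPrimes (MvPolynomial (Fin n) K)
          (MvPolynomial (Fin n) K ⧸ I ^ s) ↔
        Ideal.span (Set.range (X : {i : Fin n // i ∈ F} →
            MvPolynomial {i : Fin n // i ∈ F} K)) ∈
          associatedPrimes (MvPolynomial {i : Fin n // i ∈ F} K)
            (MvPolynomial {i : Fin n // i ∈ F} K ⧸ J ^ s)) :=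
  stmt10_general n I A hgen F P hPF J hJ
end

section
/- Let K be a field and A a commutative ℕ-graded ring that is a finitely generated K-algebra with A_0 = K, and let M be a finitely generated ℤ-graded A-module. Then the Krull dimension of M (the Krull dimension of A/Ann(M)) is positive if and only if M_s ≠ 0 for infinitely many integers s. -/
/-!
If only finitely many `M_s` are nonzero, then every homogeneous element of positive degree acts
nilpotently on `M`, so the irrelevant ideal `A₊` lies in the radical of `Ann M`. Since
`A / A₊ ≅ K`, the ideal `A₊` is maximal and is then the only prime containing `Ann M`, so
`A / Ann M` has dimension zero. Conversely, a zero-dimensional finitely generated `K`-algebra is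
Artinian and hence finite over `K`, so `M` is a finite-dimensional `K`-vector space and the
independent family `(M_s)` has only finitely many nonzero members.
-/

open DirectSum HomogeneousIdeal

section Irrelevant

variable {K A : Type*} [Field K] [CommRing A] [Algebra K A] {𝒜 : ℕ → Submodule K A}
  [GradedAlgebra 𝒜]

theorem Ideal.isMaximal_of_irrelevant_le (hA0 : 𝒜 0 = 1) {J : Ideal A} (hJ : J ≠ ⊤)
    (hle : (𝒜₊).toIdeal ≤ J) : J.IsMaximal := by
  refine Ideal.isMaximal_iff.mpr ⟨(J.ne_top_iff_one).mp hJ, fun J' x hJJ' hxJ hxJ' => ?_⟩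
  obtain ⟨c, hc⟩ : ∃ c : K, algebraMap K A c = GradedRing.projZeroRingHom 𝒜 x :=
    Submodule.mem_one.mp (hA0 ▸ SetLike.coe_mem _)
  have hsub : x - GradedRing.projZeroRingHom 𝒜 x ∈ 𝒜₊ := by
    simp [GradedRing.proj_apply]
  have hc0 : c ≠ 0 := by
    rintro rfl
    exact hxJ (by simpa [← hc] using hle hsub)
  have hcJ' : algebraMap K A c ∈ J' := by
    simpa [hc] using J'.sub_mem hxJ' (hJJ' (hle hsub))
  simpa [← map_mul, hc0] using J'.mul_mem_left (algebraMap K A c⁻¹) hcJ'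

theorem Ideal.krullDimLE_zero_quotient_of_irrelevant_le_radical (hA0 : 𝒜 0 = 1) {I : Ideal A}
    (h : (𝒜₊).toIdeal ≤ I.radical) : Ring.KrullDimLE 0 (A ⧸ I) := by
  refine Ideal.krullDimLE_zero_quotient_iff_forall_minimalPrimes_isMaximal.mpr fun J hJ => ?_
  have hJprime : J.IsPrime := hJ.1.1
  exact isMaximal_of_irrelevant_le hA0 hJprime.ne_top
    (h.trans (hJprime.radical_le_iff.mpr hJ.1.2))

end Irrelevant

section GradedModule

variable {K A M : Type*} [CommSemiring K] [CommSemiring A] [Algebra K A]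
  [AddCommMonoid M] [Module K M] [Module A M] {𝒜 : ℕ → Submodule K A} [GradedAlgebra 𝒜]
  {ℳ : ℤ → Submodule K M} [Decomposition ℳ]

theorem mem_radical_annihilator_of_mem_graded
    (hsmul : ∀ (i : ℕ) (j : ℤ), ∀ a ∈ 𝒜 i, ∀ x ∈ ℳ j, a • x ∈ ℳ ((i : ℤ) + j))
    (hfin : {s : ℤ | ℳ s ≠ ⊥}.Finite) {i : ℕ} (hi : 0 < i) {a : A} (ha : a ∈ 𝒜 i) :
    a ∈ (Module.annihilator A M).radical := by
  obtain ⟨B, hB⟩ := hfin.bddAbove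
  obtain ⟨C, hC⟩ := hfin.bddBelow
  -- `a ^ n` raises degrees by at least `n > B - C`, the width of the support of `ℳ`.
  set n := (B - C + 1).toNat
  refine ⟨n, Module.mem_annihilator.mpr fun m => ?_⟩
  induction m using DirectSum.Decomposition.inductionOn ℳ with
  | zero => exact smul_zero _
  | @homogeneous s x =>
    obtain ⟨x, hx⟩ := x
    by_cases hs : ℳ s = ⊥
    · simp [(Submodule.eq_bot_iff _).mp hs x hx]
    have hmem := hsmul _ _ _ (SetLike.pow_mem_graded n ha) _ hx
    suffices ℳ ((n • i : ℕ) + s) = ⊥ from (Submodule.eq_bot_iff _).mp this _ hmem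
    by_contra hne
    have hn : B - C + 1 ≤ (n : ℤ) := Int.self_le_toNat _
    have hni : (n : ℤ) ≤ (n • i : ℕ) := by
      rw [smul_eq_mul]
      exact_mod_cast Nat.le_mul_of_pos_right n hi
    linarith [hB hne, hC hs]
  | add x y hx hy => rw [smul_add, hx, hy, add_zero]

theorem irrelevant_le_radical_annihilator
    (hsmul : ∀ (i : ℕ) (j : ℤ), ∀ a ∈ 𝒜 i, ∀ x ∈ ℳ j, a • x ∈ ℳ ((i : ℤ) + j))
    (hfin : {s : ℤ | ℳ s ≠ ⊥}.Finite) :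
    (𝒜₊).toIdeal ≤ (Module.annihilator A M).radical := by
  rw [irrelevant_eq_span, Ideal.span_le]
  simp only [Set.iUnion_subset_iff]
  exact fun i hi a ha => mem_radical_annihilator_of_mem_graded hsmul hfin hi ha

end GradedModule

theorem DirectSum.Decomposition.finite_setOf_ne_bot {ι K M : Type*} [DecidableEq ι] [Field K]
    [AddCommGroup M] [Module K M] [Module.Finite K M] (ℳ : ι → Submodule K M)
    [Decomposition ℳ] : {i | ℳ i ≠ ⊥}.Finite :=
  have := (Decomposition.isInternal ℳ).submodule_iSupIndep.fintypeNeBotOfFiniteDimensional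
  Set.finite_coe_iff.mp (Finite.of_fintype {i // ℳ i ≠ ⊥})

theorem Module.finite_of_krullDimLE_zero_quotient_annihilator {K A M : Type*} [CommRing K]
    [IsNoetherianRing K] [IsJacobsonRing K] [CommRing A] [Algebra K A] [Algebra.FiniteType K A]
    [AddCommGroup M] [Module K M] [Module A M] [IsScalarTower K A M] [Module.Finite A M]
    [Ring.KrullDimLE 0 (A ⧸ Module.annihilator A M)] : Module.Finite K M := by
  let R := A ⧸ Module.annihilator A M
  let _ : Module R M := Module.quotientAnnihilator
  have : IsScalarTower A R M := (Module.isTorsionBySet_annihilator A M).isScalarTower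
  have : IsScalarTower K R M := (Module.isTorsionBySet_annihilator A M).isScalarTower
  have : IsNoetherianRing R := Algebra.FiniteType.isNoetherianRing K R
  have : IsArtinianRing R := isArtinianRing_iff_isNoetherianRing_krullDimLE_zero.mpr ⟨‹_›, ‹_›⟩
  have : Module.Finite K R := Module.finite_of_isArtinianRing K R
  have : Module.Finite R M := Module.Finite.of_restrictScalars_finite A R M
  exact Module.Finite.trans R M

/-- For a commutative ℕ-graded ring `A` that is a finitely generated `K`-algebra with
`A_0 = K` (`K` a field), and a finitely generated ℤ-graded `A`-module `M`, the Krull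
dimension of `M` (i.e. of `A / Ann(M)`) is positive if and only if `M_s ≠ 0` for
infinitely many `s`. -/
theorem stmt11 {K A M : Type*} [Field K] [CommRing A] [Algebra K A]
    (𝒜 : ℕ → Submodule K A) [GradedAlgebra 𝒜]
    (hA0 : 𝒜 0 = (1 : Submodule K A))
    (hfg : Algebra.FiniteType K A)
    [AddCommGroup M] [Module K M] [Module A M] [IsScalarTower K A M]
    [Module.Finite A M]
    (ℳ : ℤ → Submodule K M) [DirectSum.Decomposition ℳ]
    (hsmul : ∀ (i : ℕ) (j : ℤ), ∀ a ∈ 𝒜 i, ∀ x ∈ ℳ j, a • x ∈ ℳ ((i : ℤ) + j)) :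
    0 < ringKrullDim (A ⧸ Module.annihilator A M) ↔
      {s : ℤ | ℳ s ≠ ⊥}.Infinite := by
  rw [← not_le, ← Nat.cast_zero, ← Ring.krullDimLE_iff, Set.Infinite, not_iff_not]
  constructor
  · intro
    have : Module.Finite K M := Module.finite_of_krullDimLE_zero_quotient_annihilator (A := A)
    exact Decomposition.finite_setOf_ne_bot ℳ
  · exact fun hfin => Ideal.krullDimLE_zero_quotient_of_irrelevant_le_radical hA0
      (irrelevant_le_radical_annihilator hsmul hfin)
end

section
/- Let K be a field, S = K[x_1, ..., x_n] the polynomial ring, and I ⊆ S a monomial ideal. Then every associated prime ideal of S/I is a monomial prime ideal, that is, an ideal of the form P_F = ({x_i : i ∈ F}) for some subset F ⊆ {1, ..., n}. -/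
open MvPolynomial

/-!
Write the associated prime as `p = I : f`. Fix a monomial order and let `x^d` be the leading
monomial of some `g ∈ p`. The leading term of `g * f ∈ I` is the product of the leading terms,
so it lies in the monomial ideal `I`; removing the leading term of `f` and inducting on the number
of terms gives `x^(d k) f ∈ I` for some `k`, i.e. `x^d ∈ p` because `p` is radical. Removing the
leading term of `g` and inducting again, every monomial of every element of `p` lies in `p`. A
prime containing a monomial contains one of its variables, so `p` is generated by the variables
it contains.
-/
namespace MvPolynomial

variable {σ R : Type*}

section CommSemiring

variable [CommSemiring R]

def IsTermClosed (J : Ideal (MvPolynomial σ R)) : Prop :=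
  ∀ f ∈ J, ∀ u ∈ f.support, monomial u 1 ∈ J

theorem isTermClosed_span_monomial (A : Set (σ →₀ ℕ)) :
    IsTermClosed (Ideal.span ((fun a => monomial a (1 : R)) '' A)) := by
  intro f hf u hu
  rw [mem_ideal_span_monomial_image] at hf ⊢
  intro v hv
  rw [Finset.mem_singleton.1 (support_monomial_subset hv)]
  exact hf u hu

theorem IsTermClosed.monomial_mem {J : Ideal (MvPolynomial σ R)} (hJ : IsTermClosed J)
    {f : MvPolynomial σ R} (hf : f ∈ J) {u : σ →₀ ℕ} (hu : u ∈ f.support) (c : R) :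
    monomial u c ∈ J := by
  simpa [C_mul_monomial] using J.mul_mem_left (C c) (hJ f hf u hu)

theorem card_support_monomial_one_mul (s : σ →₀ ℕ) (p : MvPolynomial σ R) :
    (monomial s (1 : R) * p).support.card = p.support.card := by
  have : (monomial s (1 : R) * p).support = p.support.map (addLeftEmbedding s) :=
    AddMonoidAlgebra.support_coeff_single_mul p _ (fun y => by rw [one_mul]) _
  rw [this, Finset.card_map]

theorem IsTermClosed.eq_span_X_image {p : Ideal (MvPolynomial σ R)} (hp : p.IsPrime)
    (hpt : IsTermClosed p) : p = Ideal.span (X '' {i | X i ∈ p}) := by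
  refine le_antisymm (fun g hg => mem_ideal_span_X_image.2 fun u hu => ?_)
    (Ideal.span_le.2 <| Set.image_subset_iff.2 fun i hi => hi)
  have hmon := hpt g hg u hu
  rw [monomial_eq, C_1, one_mul, Finsupp.prod, hp.prod_mem_iff] at hmon
  obtain ⟨i, hi, hXi⟩ := hmon
  exact ⟨i, hp.mem_of_pow_mem _ hXi, Finsupp.mem_support_iff.1 hi⟩

end CommSemiring

section CommRing

variable [CommRing R]

theorem support_sub_leadingTerm [DecidableEq σ] (m : MonomialOrder σ) (f : MvPolynomial σ R) :
    (f - m.leadingTerm f).support = f.support.erase (m.degree f) := by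
  ext u
  rcases eq_or_ne u (m.degree f) with rfl | hu
  · simp [MonomialOrder.leadingTerm, MonomialOrder.leadingCoeff]
  · simp [MonomialOrder.leadingTerm, coeff_monomial, hu, Ne.symm hu]

variable [NoZeroDivisors R]

theorem IsTermClosed.monomial_degree_add_mem (m : MonomialOrder σ)
    {I : Ideal (MvPolynomial σ R)} (hI : IsTermClosed I) {g f : MvPolynomial σ R}
    (hg : g ≠ 0) (hf : f ≠ 0) (hgf : g * f ∈ I) (c : R) :
    monomial (m.degree g + m.degree f) c ∈ I := by
  refine hI.monomial_mem hgf ?_ c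
  rw [← m.degree_mul hg hf]
  exact m.degree_mem_support (mul_ne_zero hg hf)

theorem IsTermClosed.exists_monomial_degree_pow_mul_mem (m : MonomialOrder σ)
    {I : Ideal (MvPolynomial σ R)} (hI : IsTermClosed I) {g : MvPolynomial σ R} (hg : g ≠ 0)
    {f : MvPolynomial σ R} (hgf : g * f ∈ I) :
    ∃ k : ℕ, monomial (m.degree g) (1 : R) ^ k * f ∈ I := by
  classical
  induction hcard : f.support.card using Nat.strong_induction_on generalizing f with
  | _ r ih =>
  rcases eq_or_ne f 0 with rfl | hf
  · exact ⟨0, by simp⟩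
  set x := monomial (m.degree g) (1 : R)
  have hxt : x * m.leadingTerm f ∈ I := by
    rw [MonomialOrder.leadingTerm, monomial_mul, one_mul]
    exact hI.monomial_degree_add_mem m hg hf hgf _
  set f' := x * (f - m.leadingTerm f)
  have hgf' : g * f' ∈ I := by
    have : g * f' = x * (g * f) - g * (x * m.leadingTerm f) := by ring
    rw [this]
    exact I.sub_mem (I.mul_mem_left _ hgf) (I.mul_mem_left _ hxt)
  have hlt : f'.support.card < r := by
    rw [card_support_monomial_one_mul, support_sub_leadingTerm,
      Finset.card_erase_of_mem (m.degree_mem_support hf), ← hcard]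
    exact Nat.sub_lt (Finset.card_pos.2 (support_nonempty.2 hf)) one_pos
  obtain ⟨k, hk⟩ := ih _ hlt hgf' rfl
  refine ⟨k + 1, ?_⟩
  have : x ^ (k + 1) * f = x ^ k * f' + x ^ k * (x * m.leadingTerm f) := by ring
  rw [this]
  exact I.add_mem hk (I.mul_mem_left _ hxt)

theorem IsTermClosed.colon_singleton [LinearOrder σ] [WellFoundedGT σ]
    {I : Ideal (MvPolynomial σ R)} (hI : IsTermClosed I) (f : MvPolynomial σ R)
    (hrad : (I.colon {f}).IsRadical) : IsTermClosed (I.colon {f}) := by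
  classical
  let m : MonomialOrder σ := MonomialOrder.lex
  intro g hg
  induction hcard : g.support.card using Nat.strong_induction_on generalizing g with
  | _ r ih =>
  intro u hu
  have hg0 : g ≠ 0 := support_nonempty.1 ⟨u, hu⟩
  have hlead : monomial (m.degree g) (1 : R) ∈ I.colon {f} := by
    rw [Submodule.mem_colon_singleton, smul_eq_mul] at hg
    obtain ⟨k, hk⟩ := hI.exists_monomial_degree_pow_mul_mem m hg0 hg
    exact hrad ⟨k, Submodule.mem_colon_singleton.2 hk⟩
  rcases eq_or_ne u (m.degree g) with rfl | hu'
  · exact hlead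
  have hg' : g - m.leadingTerm g ∈ I.colon {f} := by
    refine sub_mem hg ?_
    rw [MonomialOrder.leadingTerm, ← mul_one (m.leadingCoeff g), ← C_mul_monomial]
    exact Ideal.mul_mem_left _ _ hlead
  refine ih _ ?_ _ hg' rfl u ?_
  · rw [support_sub_leadingTerm, Finset.card_erase_of_mem (m.degree_mem_support hg0), ← hcard]
    exact Nat.sub_lt (Finset.card_pos.2 ⟨u, hu⟩) one_pos
  · rw [support_sub_leadingTerm]
    exact Finset.mem_erase.2 ⟨hu', hu⟩

end CommRing

end MvPolynomial

theorem Ideal.colon_bot_singleton_mk {R : Type*} [CommRing R] (I : Ideal R) (x : R) :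
    (⊥ : Submodule R (R ⧸ I)).colon {Ideal.Quotient.mk I x} = I.colon {x} := by
  ext y
  rw [Submodule.mem_colon_singleton, Submodule.mem_colon_singleton, Algebra.smul_def,
    Ideal.Quotient.algebraMap_eq, ← map_mul, Submodule.mem_bot, Ideal.Quotient.eq_zero_iff_mem,
    smul_eq_mul]

/-- Every associated prime of `S/I`, for a monomial ideal `I ⊆ S = K[x_1, ..., x_n]`,
is a monomial prime ideal `P_F = ({x_i : i ∈ F})` for some `F ⊆ {1, ..., n}`. -/
theorem stmt12 {K : Type*} [Field K] (n : ℕ)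
    (I : Ideal (MvPolynomial (Fin n) K)) (hI : IsMonomialIdeal I) :
    ∀ p ∈ associatedPrimes (MvPolynomial (Fin n) K) (MvPolynomial (Fin n) K ⧸ I),
      ∃ F : Set (Fin n), p = Ideal.span ((X : Fin n → MvPolynomial (Fin n) K) '' F) := by
  obtain ⟨A, rfl⟩ := hI
  intro p hp
  obtain ⟨hprime, x, rfl⟩ := isAssociatedPrime_iff.1 hp
  obtain ⟨f, rfl⟩ := Ideal.Quotient.mk_surjective x
  rw [Ideal.colon_bot_singleton_mk] at hprime ⊢
  exact ⟨_, ((isTermClosed_span_monomial A).colon_singleton f hprime.isRadical).eq_span_X_image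
    hprime⟩
end
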